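/- arXiv:1901.05328 — 3 statements merged into one kernel-verified Lean document; each statement's English description precedes it below -/
import Mathlib

section
/- Define f(t) = ∑_{j=0}^{∞} t^{2j}(1+t) q^{2j²} (tzq;q²)_j (tq/z;q²)_j / (t²;q²)_{2j+1} as a formal power series in t. Then f satisfies the functional equation f(t) = 1/(1-t) + [t² q² (1-tzq)(1-tq/z)] / [(1-t²q²)(1+tq²)(1-t)] · f(tq²). -/
open Finset PowerSeries

/-- The `j`-th term of the series
`f(t) = ∑_j t^{2j}(1+t) q^{2j²} (tzq;q²)_j (tq/z;q²)_j / (t²;q²)_{2j+1}`,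
as a formal power series in `t` over the field `K` (think of `K = ℚ(z,q)`). -/
noncomputable def fTerm {K : Type*} [Field K] (z q : K) (j : ℕ) : PowerSeries K :=
  (PowerSeries.X : PowerSeries K) ^ (2*j) * (1 + PowerSeries.X)
    * PowerSeries.C (q ^ (2*j^2))
    * (∏ k ∈ range j, (1 - PowerSeries.X * PowerSeries.C (z * q ^ (2*k+1))))
    * (∏ k ∈ range j, (1 - PowerSeries.X * PowerSeries.C (q ^ (2*k+1) / z)))
    * (∏ k ∈ range (2*j+1), (1 - PowerSeries.X ^ 2 * PowerSeries.C (q ^ (2*k))))⁻¹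

/-- `P n = P_n(z,q)`, the coefficient of `t^n` in `f(t)`.  Since the `j`-th term of
`f` is divisible by `t^{2j}`, only the terms with `j ≤ n` contribute to the
coefficient of `t^n`, so the truncated finite sum gives the honest coefficient. -/
noncomputable def fCoeff {K : Type*} [Field K] (z q : K) (n : ℕ) : K :=
  PowerSeries.coeff n (∑ j ∈ range (n+1), fTerm z q j)

/-! Writing `T_j` for the `j`-th summand of `f`, the shift `(a;q)_{j+1} = (1 - a)(aq;q)_j` of its
three Pochhammer factors gives `T_{j+1}(t) = R(t) T_j(q²t)`, where `R` is the multiplier of the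
functional equation, and `T_0 = 1/(1-t)`. Hence the partial sums satisfy
`∑_{j≤N} T_j = 1/(1-t) + R(t) ∑_{j<N} T_j(q²t)`, and since `t^{2j} ∣ T_j` they agree with
`f` modulo `t^N`; so the two sides of the functional equation agree modulo every `t^N`. -/

namespace PowerSeries

section CommSemiring

variable {R : Type*} [CommSemiring R]

theorem rescale_C (a b : R) : rescale a (C b) = C b := by
  ext n
  rw [coeff_rescale, coeff_C]
  split_ifs with h <;> simp [h]

theorem X_pow_dvd_rescale {n : ℕ} {φ : R⟦X⟧} (a : R) (h : X ^ n ∣ φ) :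
    X ^ n ∣ rescale a φ := by
  rw [X_pow_dvd_iff] at h ⊢
  intro m hm
  rw [coeff_rescale, h m hm, mul_zero]

end CommSemiring

section CommRing

variable {R : Type*} [CommRing R]

theorem eq_of_forall_X_pow_dvd_sub {φ ψ : R⟦X⟧} (h : ∀ n, X ^ n ∣ φ - ψ) : φ = ψ := by
  ext n
  rw [← sub_eq_zero, ← map_sub]
  exact X_pow_dvd_iff.mp (h (n + 1)) n n.lt_succ_self

theorem X_pow_dvd_sum_range_sub {g : ℕ → R⟦X⟧} (hg : ∀ j, X ^ j ∣ g j) {N M : ℕ}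
    (h : N ≤ M) :
    X ^ N ∣ ∑ j ∈ range M, g j - ∑ j ∈ range N, g j := by
  rw [← sum_Ico_eq_sub _ h]
  exact dvd_sum fun j hj => (pow_dvd_pow X (mem_Ico.mp hj).1).trans (hg j)

end CommRing

section Field

variable {k : Type*} [Field k]

theorem rescale_inv (a : k) (φ : k⟦X⟧) : rescale a φ⁻¹ = (rescale a φ)⁻¹ := by
  have hconst : constantCoeff (rescale a φ) = constantCoeff φ := by
    rw [← coeff_zero_eq_constantCoeff_apply, coeff_rescale, pow_zero, one_mul,
      coeff_zero_eq_constantCoeff_apply]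
  by_cases hφ : constantCoeff φ = 0
  · rw [inv_eq_zero.mpr hφ, inv_eq_zero.mpr (hconst ▸ hφ), map_zero]
  · rw [eq_inv_iff_mul_eq_one (hconst ▸ hφ), ← map_mul, PowerSeries.inv_mul_cancel φ hφ,
      map_one]

theorem mul_inv_eq_mul_inv_of_mul_eq {a b c d : k⟦X⟧} (hb : constantCoeff b ≠ 0)
    (hd : constantCoeff d ≠ 0) (h : a * d = c * b) : a * b⁻¹ = c * d⁻¹ := by
  rw [eq_mul_inv_iff_mul_eq hd, mul_right_comm, h, mul_assoc, PowerSeries.mul_inv_cancel b hb,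
    mul_one]

end Field

end PowerSeries

section QPochhammer

variable {A B : Type*} [CommRing A] [CommRing B]

def qPochhammer (a q : A) (n : ℕ) : A :=
  ∏ k ∈ range n, (1 - a * q ^ k)

theorem qPochhammer_succ' (a q : A) (n : ℕ) :
    qPochhammer a q (n + 1) = (1 - a) * qPochhammer (a * q) q n := by
  simp only [qPochhammer, prod_range_succ', pow_zero, mul_one, pow_succ, mul_assoc, mul_comm q]
  ring

theorem qPochhammer_zero_left (q : A) (n : ℕ) : qPochhammer 0 q n = 1 := by
  simp [qPochhammer]

theorem map_qPochhammer (f : A →+* B) (a q : A) (n : ℕ) :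
    f (qPochhammer a q n) = qPochhammer (f a) (f q) n := by
  simp [qPochhammer, map_prod]

theorem constantCoeff_qPochhammer {a : A⟦X⟧} (ha : constantCoeff a = 0) (b : A⟦X⟧)
    (n : ℕ) : constantCoeff (qPochhammer a b n) = 1 := by
  rw [map_qPochhammer, ha, qPochhammer_zero_left]

end QPochhammer

section FunctionalEquation

variable {K : Type*} [Field K]

noncomputable def fFactor (z q : K) : K⟦X⟧ :=
  (X ^ 2 * C (q ^ 2) * (1 - X * C (z * q)) * (1 - X * C (q / z)))
    * ((1 - X ^ 2 * C (q ^ 2)) * (1 + X * C (q ^ 2)) * (1 - X))⁻¹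

theorem fTerm_eq_qPochhammer (z q : K) (j : ℕ) :
    fTerm z q j = X ^ (2 * j) * (1 + X) * C (q ^ (2 * j ^ 2))
      * qPochhammer (X * C (z * q)) (C (q ^ 2)) j * qPochhammer (X * C (q / z)) (C (q ^ 2)) j
      * (qPochhammer (X ^ 2) (C (q ^ 2)) (2 * j + 1))⁻¹ := by
  unfold fTerm qPochhammer
  congr 3
  · exact prod_congr rfl fun k _ => by simp only [map_mul, map_pow]; ring
  all_goals funext k; simp only [div_eq_mul_inv, map_mul, map_pow]; ring

theorem X_pow_dvd_fTerm (z q : K) (j : ℕ) : X ^ (2 * j) ∣ fTerm z q j := by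
  rw [fTerm]
  exact ((((dvd_mul_right _ _).mul_right _).mul_right _).mul_right _).mul_right _

theorem fTerm_zero (z q : K) : fTerm z q 0 = (1 - X)⁻¹ := by
  have h : (1 + X) * (1 - X ^ 2 : K⟦X⟧)⁻¹ = 1 * (1 - X)⁻¹ :=
    mul_inv_eq_mul_inv_of_mul_eq (by simp) (by simp) (by ring)
  simpa [fTerm] using h

theorem fTerm_succ (z q : K) (j : ℕ) :
    fTerm z q (j + 1) = fFactor z q * rescale (q ^ 2) (fTerm z q j) := by
  have hzq : rescale (q ^ 2) (X * C (z * q)) = X * C (z * q) * C (q ^ 2) := by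
    rw [map_mul, rescale_X, rescale_C]; ring
  have hqz : rescale (q ^ 2) (X * C (q / z)) = X * C (q / z) * C (q ^ 2) := by
    rw [map_mul, rescale_X, rescale_C]; ring
  have hX2 : rescale (q ^ 2) (X ^ 2) = X ^ 2 * C (q ^ 2) * C (q ^ 2) := by
    rw [map_pow, rescale_X]; ring
  -- `↓` makes these fire before `map_mul` can split the Pochhammer arguments
  simp only [fTerm_eq_qPochhammer, fFactor, map_mul (rescale _), map_pow (rescale _),
    map_add (rescale _), map_one (rescale _), rescale_X, rescale_C, rescale_inv,
    map_qPochhammer (rescale (q ^ 2)), ↓hzq, ↓hqz, ↓hX2]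
  rw [mul_mul_mul_comm, ← PowerSeries.mul_inv_rev]
  refine mul_inv_eq_mul_inv_of_mul_eq ?_ ?_ ?_
  · simp [constantCoeff_qPochhammer]
  · simp [constantCoeff_qPochhammer]
  · rw [qPochhammer_succ' (X * C (z * q)), qPochhammer_succ' (X * C (q / z)),
      show 2 * (j + 1) + 1 = 2 * j + 1 + 1 + 1 by ring, qPochhammer_succ' (X ^ 2),
      qPochhammer_succ' (X ^ 2 * C (q ^ 2))]
    simp only [map_pow]
    ring

theorem sum_range_succ_fTerm (z q : K) (N : ℕ) :
    ∑ j ∈ range (N + 1), fTerm z q j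
      = (1 - X)⁻¹ + fFactor z q * rescale (q ^ 2) (∑ j ∈ range N, fTerm z q j) := by
  simp only [sum_range_succ', fTerm_zero, fTerm_succ, map_sum, mul_sum, add_comm]

theorem X_pow_dvd_mk_fCoeff_sub (z q : K) (N : ℕ) :
    X ^ N ∣ PowerSeries.mk (fCoeff z q) - ∑ j ∈ range N, fTerm z q j := by
  have hterm (j : ℕ) : X ^ j ∣ fTerm z q j :=
    (pow_dvd_pow X (Nat.le_mul_of_pos_left j two_pos)).trans (X_pow_dvd_fTerm z q j)
  refine X_pow_dvd_iff.mpr fun m hm => ?_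
  have htail := X_pow_dvd_iff.mp (X_pow_dvd_sum_range_sub hterm hm) m m.lt_succ_self
  rw [map_sub, sub_eq_zero] at htail
  rw [map_sub, coeff_mk, fCoeff, htail, sub_self]

end FunctionalEquation

theorem f_functional_equation_general {K : Type*} [Field K] (z q : K) :
    (PowerSeries.mk (fCoeff z q) : PowerSeries K) =
      (1 - PowerSeries.X)⁻¹ +
        (PowerSeries.X ^ 2 * PowerSeries.C (q ^ 2)
            * (1 - PowerSeries.X * PowerSeries.C (z * q))
            * (1 - PowerSeries.X * PowerSeries.C (q / z)))
          * ((1 - PowerSeries.X ^ 2 * PowerSeries.C (q ^ 2))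
              * (1 + PowerSeries.X * PowerSeries.C (q ^ 2))
              * (1 - PowerSeries.X))⁻¹
          * PowerSeries.rescale (q ^ 2) (PowerSeries.mk (fCoeff z q)) := by
  change _ = _ + fFactor z q * _
  set F := PowerSeries.mk (fCoeff z q)
  refine eq_of_forall_X_pow_dvd_sub fun N => ?_
  have hsplit : F - ((1 - X)⁻¹ + fFactor z q * rescale (q ^ 2) F)
      = (F - ∑ j ∈ range (N + 1), fTerm z q j)
        - fFactor z q * rescale (q ^ 2) (F - ∑ j ∈ range N, fTerm z q j) := by
    rw [sum_range_succ_fTerm, map_sub]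
    ring
  rw [hsplit]
  exact dvd_sub ((pow_dvd_pow X N.le_succ).trans (X_pow_dvd_mk_fCoeff_sub z q (N + 1)))
    ((X_pow_dvd_rescale _ (X_pow_dvd_mk_fCoeff_sub z q N)).mul_left _)

/-- The generating function `f(t)` satisfies the functional equation
`f(t) = 1/(1-t) + [t²q²(1-tzq)(1-tq/z)]/[(1-t²q²)(1+tq²)(1-t)] · f(tq²)`. -/
theorem f_functional_equation {K : Type*} [Field K] (z q : K) (hz : z ≠ 0) :
    (PowerSeries.mk (fCoeff z q) : PowerSeries K) =
      (1 - PowerSeries.X)⁻¹ +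
        (PowerSeries.X ^ 2 * PowerSeries.C (q ^ 2)
            * (1 - PowerSeries.X * PowerSeries.C (z * q))
            * (1 - PowerSeries.X * PowerSeries.C (q / z)))
          * ((1 - PowerSeries.X ^ 2 * PowerSeries.C (q ^ 2))
              * (1 + PowerSeries.X * PowerSeries.C (q ^ 2))
              * (1 - PowerSeries.X))⁻¹
          * PowerSeries.rescale (q ^ 2) (PowerSeries.mk (fCoeff z q)) :=
  f_functional_equation_general z q
end

section
/- For every n ≥ 0, the coefficient P_n(z,q) of t^n in f(t) = ∑_{j=0}^{∞} t^{2j}(1+t) q^{2j²} (tzq;q²)_j (tq/z;q²)_j / (t²;q²)_{2j+1} equals the triple sum ∑_{j=0}^{⌊n/2⌋} ∑_{h=0}^{j} ∑_{i=0}^{j} (-1)^{h+i} z^{h-i} q^{h²+i²+2j²} qbinom(j,h;q²) qbinom(j,i;q²) qbinom(j + ⌊(n-h-i)/2⌋, 2j; q²). -/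
open Finset PowerSeries

/-- The Gaussian binomial coefficient `[n choose k]_q`. -/
def gb {K : Type*} [CommRing K] (q : K) : ℕ → ℕ → K
  | _, 0 => 1
  | 0, _+1 => 0
  | n+1, k+1 => gb q n k + q ^ (k+1) * gb q n (k+1)

/-! By the finite `q²`-binomial theorem, `(tzq;q²)_j` and `(tq/z;q²)_j` are polynomials in `t`
of degree `j` with coefficients `(-1)^h z^{±h} q^{h²} [j,h]_{q²}`, while
`(1+t)/(t²;q²)_{2j+1} = ∑_m [2j+⌊m/2⌋, 2j]_{q²} t^m` (both sides satisfy the same recursion in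
the length of the product). Multiplying these out gives the coefficient of `tⁿ` in the `j`-th
term of `f` as the double sum over `h, i ≤ j`, and the `j`-th term vanishes to order `2j`. -/

section GaussianBinomial

variable {R : Type*} [CommRing R]

@[simp]
lemma gb_zero_right (p : R) (n : ℕ) : gb p n 0 = 1 := by
  cases n <;> rfl

lemma gb_succ_succ (p : R) (n k : ℕ) :
    gb p (n + 1) (k + 1) = gb p n k + p ^ (k + 1) * gb p n (k + 1) := rfl

lemma gb_eq_zero_of_lt (p : R) {n k : ℕ} (h : n < k) : gb p n k = 0 := by
  induction n generalizing k with
  | zero => obtain ⟨k, rfl⟩ := Nat.exists_eq_succ_of_ne_zero h.ne'; rfl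
  | succ n ih =>
    obtain ⟨k, rfl⟩ := Nat.exists_eq_succ_of_ne_zero (Nat.ne_zero_of_lt h)
    rw [gb_succ_succ, ih (by omega), ih (by omega), mul_zero, add_zero]

@[simp]
lemma gb_self (p : R) (n : ℕ) : gb p n n = 1 := by
  induction n with
  | zero => rfl
  | succ n ih => rw [gb_succ_succ, ih, gb_eq_zero_of_lt p n.lt_succ_self, mul_zero, add_zero]

/-- The finite `p`-binomial theorem. -/
lemma coeff_prod_one_add_X_mul_C (p a : R) (j h : ℕ) :
    coeff h (∏ k ∈ range j, (1 + X * C (a * p ^ k))) = a ^ h * p ^ h.choose 2 * gb p j h := by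
  induction j generalizing a h with
  | zero => cases h <;> simp [coeff_one, gb_eq_zero_of_lt]
  | succ j ih =>
    have hshift : ∏ k ∈ range j, (1 + X * C (a * p ^ (k + 1)))
        = ∏ k ∈ range j, (1 + X * C (a * p * p ^ k)) :=
      prod_congr rfl fun k _ => by rw [pow_succ', mul_assoc]
    rw [prod_range_succ', hshift, pow_zero, mul_one,
      show ∀ Q : R⟦X⟧, Q * (1 + X * C a) = Q + X * (C a * Q) from fun Q => by ring, map_add]
    cases h with
    | zero => simp
    | succ h =>
      rw [coeff_succ_X_mul, coeff_C_mul, ih, ih, gb_succ_succ, Nat.choose_succ_succ',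
        Nat.choose_one_right]
      ring

lemma coeff_prod_one_add_X_mul_C_eq_zero (p a : R) {j h : ℕ} (hjh : j < h) :
    coeff h (∏ k ∈ range j, (1 + X * C (a * p ^ k))) = 0 := by
  rw [coeff_prod_one_add_X_mul_C, gb_eq_zero_of_lt p hjh, mul_zero]

lemma coeff_mul_eq_sum_range {φ : R⟦X⟧} {j n : ℕ}
    (hφ : ∀ i, j < i → coeff i φ = 0) (hjn : j ≤ n) (ψ : R⟦X⟧) :
    coeff n (φ * ψ) = ∑ i ∈ range (j + 1), coeff i φ * coeff (n - i) ψ := by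
  rw [coeff_mul, Nat.sum_antidiagonal_eq_sum_range_succ_mk]
  refine (sum_subset (range_subset_range.mpr (by omega)) fun i _ hi => ?_).symm
  rw [hφ i (by simpa using hi), zero_mul]

lemma neg_mul_pow_mul_sq_pow_choose_two (a q : R) (h : ℕ) :
    (-(a * q)) ^ h * (q ^ 2) ^ h.choose 2 = (-1) ^ h * a ^ h * q ^ h ^ 2 := by
  have hexp : h + 2 * h.choose 2 = h ^ 2 := by
    induction h with
    | zero => rfl
    | succ h ih => rw [Nat.choose_succ_succ', Nat.choose_one_right]; nlinarith
  rw [← hexp, pow_add, pow_mul, neg_eq_neg_one_mul, mul_pow, mul_pow]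
  ring

/-- `(1 + X) / ∏_{k ≤ r} (1 - p^k X²) = ∑_n [r + ⌊n/2⌋, r]_p Xⁿ`. -/
noncomputable def gbSeries (p : R) (r : ℕ) : R⟦X⟧ :=
  mk fun n => gb p (r + n / 2) r

lemma coeff_gbSeries (p : R) (r n : ℕ) : coeff n (gbSeries p r) = gb p (r + n / 2) r :=
  coeff_mk _ _

lemma one_sub_X_sq_mul_gbSeries_zero (p : R) : (1 - X ^ 2) * gbSeries p 0 = 1 + X := by
  ext n
  rw [sub_mul, one_mul, map_sub, coeff_X_pow_mul']
  simp only [coeff_gbSeries, gb_zero_right, map_add, coeff_one, coeff_X]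
  rcases n with _ | _ | n <;> simp

lemma one_sub_X_sq_mul_C_mul_gbSeries_succ (p : R) (r : ℕ) :
    (1 - X ^ 2 * C (p ^ (r + 1))) * gbSeries p (r + 1) = gbSeries p r := by
  ext n
  rw [sub_mul, one_mul, mul_assoc, map_sub, coeff_X_pow_mul']
  simp only [coeff_C_mul, coeff_gbSeries]
  rcases n with _ | _ | n
  · simp
  · simp
  · rw [if_pos (by omega), show (n + 2) / 2 = n / 2 + 1 by omega, show n + 2 - 2 = n by omega,
      show r + 1 + (n / 2 + 1) = r + n / 2 + 1 + 1 by omega, gb_succ_succ,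
      show r + 1 + n / 2 = r + n / 2 + 1 by omega, show r + (n / 2 + 1) = r + n / 2 + 1 by omega,
      add_sub_cancel_right]

lemma prod_one_sub_X_sq_mul_gbSeries (p : R) (r : ℕ) :
    (∏ k ∈ range (r + 1), (1 - X ^ 2 * C (p ^ k))) * gbSeries p r = 1 + X := by
  induction r with
  | zero => simpa using one_sub_X_sq_mul_gbSeries_zero p
  | succ r ih =>
    rw [prod_range_succ, mul_assoc, one_sub_X_sq_mul_C_mul_gbSeries_succ, ih]

lemma coeff_X_pow_mul_gbSeries (p : R) {s r : ℕ} (hsr : s ≤ r) (n : ℕ) :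
    coeff n (X ^ (2 * s) * gbSeries p r) = gb p (r - s + n / 2) r := by
  rw [coeff_X_pow_mul', coeff_gbSeries]
  split_ifs with h
  · congr 1; omega
  · rw [gb_eq_zero_of_lt p (by omega)]

end GaussianBinomial

section fTerm

variable {K : Type*} [Field K]

lemma fTerm_eq (z q : K) (j : ℕ) :
    fTerm z q j = C (q ^ (2 * j ^ 2)) *
      ((∏ k ∈ range j, (1 + X * C (-(z * q) * (q ^ 2) ^ k))) *
        ((∏ k ∈ range j, (1 + X * C (-(z⁻¹ * q) * (q ^ 2) ^ k))) *
          (X ^ (2 * j) * gbSeries (q ^ 2) (2 * j)))) := by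
  set P := ∏ k ∈ range (2 * j + 1), (1 - X ^ 2 * C (q ^ (2 * k)))
  have hP : constantCoeff P ≠ 0 := by simp [P, map_prod]
  have hgb : gbSeries (q ^ 2) (2 * j) = (1 + X) * P⁻¹ := by
    rw [eq_mul_inv_iff_mul_eq hP, mul_comm]
    simp only [P, pow_mul]
    exact prod_one_sub_X_sq_mul_gbSeries (q ^ 2) (2 * j)
  have hprod : ∀ a : K, ∀ e : ℕ → K, (∀ k, e k = a * q * (q ^ 2) ^ k) →
      ∏ k ∈ range j, (1 - X * C (e k)) = ∏ k ∈ range j, (1 + X * C (-(a * q) * (q ^ 2) ^ k)) :=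
    fun a e he => prod_congr rfl fun k _ => by rw [he, neg_mul, map_neg]; ring
  rw [fTerm, hprod z _ fun k => by ring, hprod z⁻¹ _ fun k => by ring, hgb]
  ring

lemma coeff_fTerm_eq_zero (z q : K) {n j : ℕ} (hn : n < 2 * j) : coeff n (fTerm z q j) = 0 := by
  have hdvd : (X : K⟦X⟧) ^ (2 * j) ∣ fTerm z q j := by
    rw [fTerm_eq]
    exact (((dvd_mul_right _ _).mul_left _).mul_left _).mul_left _
  exact X_pow_dvd_iff.mp hdvd n hn

lemma coeff_fTerm (z q : K) (hz : z ≠ 0) {n j : ℕ} (hjn : 2 * j ≤ n) :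
    coeff n (fTerm z q j) =
      ∑ h ∈ range (j + 1), ∑ i ∈ range (j + 1),
        (-1 : K) ^ (h + i) * z ^ ((h : ℤ) - (i : ℤ)) * q ^ (h ^ 2 + i ^ 2 + 2 * j ^ 2)
          * gb (q ^ 2) j h * gb (q ^ 2) j i * gb (q ^ 2) (j + (n - h - i) / 2) (2 * j) := by
  rw [fTerm_eq, coeff_C_mul,
    coeff_mul_eq_sum_range (fun _ => coeff_prod_one_add_X_mul_C_eq_zero _ _) (by omega), mul_sum]
  refine sum_congr rfl fun h hh => ?_
  have hhj : h ≤ j := Nat.lt_succ_iff.mp (mem_range.mp hh)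
  rw [coeff_mul_eq_sum_range (fun _ => coeff_prod_one_add_X_mul_C_eq_zero _ _) (by omega),
    mul_sum, mul_sum]
  refine sum_congr rfl fun i _ => ?_
  rw [coeff_prod_one_add_X_mul_C, coeff_prod_one_add_X_mul_C,
    coeff_X_pow_mul_gbSeries _ (by omega), show 2 * j - j = j by omega, Nat.sub_sub,
    zpow_sub₀ hz, zpow_natCast, zpow_natCast]
  calc _ = q ^ (2 * j ^ 2) * ((-(z * q)) ^ h * (q ^ 2) ^ h.choose 2)
        * ((-(z⁻¹ * q)) ^ i * (q ^ 2) ^ i.choose 2)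
        * gb (q ^ 2) j h * gb (q ^ 2) j i * gb (q ^ 2) (j + (n - (h + i)) / 2) (2 * j) := by ring
    _ = _ := by rw [neg_mul_pow_mul_sq_pow_choose_two, neg_mul_pow_mul_sq_pow_choose_two]; ring

end fTerm

/-- The coefficient `P_n(z,q)` of `t^n` in `f(t)` equals the triple sum
`∑_{j=0}^{⌊n/2⌋} ∑_{h=0}^{j} ∑_{i=0}^{j} (-1)^{h+i} z^{h-i} q^{h²+i²+2j²}
  [j,h]_{q²} [j,i]_{q²} [j+⌊(n-h-i)/2⌋, 2j]_{q²}`. -/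
theorem fCoeff_eq_triple_sum {K : Type*} [Field K] (z q : K) (hz : z ≠ 0) (n : ℕ) :
    fCoeff z q n =
      ∑ j ∈ range (n/2 + 1), ∑ h ∈ range (j+1), ∑ i ∈ range (j+1),
        (-1 : K)^(h+i) * z^((h : ℤ) - (i : ℤ)) * q^(h^2 + i^2 + 2*j^2)
          * gb (q^2) j h * gb (q^2) j i * gb (q^2) (j + (n - h - i)/2) (2*j) := by
  rw [fCoeff, map_sum, ← sum_subset (range_subset_range.mpr (by omega : n / 2 + 1 ≤ n + 1))
    fun j _ hj => coeff_fTerm_eq_zero z q (by simp only [mem_range] at hj; omega)]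
  exact sum_congr rfl fun j hj => coeff_fTerm z q hz (by simp only [mem_range] at hj; omega)
end

section
/- For n ≥ 3, the sum S_n(z,q) := ∑_{j=0}^{⌊n/2⌋} ∑_{h=0}^{j} ∑_{i=0}^{j} (-1)^{h+i} z^{h-i} q^{h²+i²+2j²} qbinom(j,h;q²) qbinom(j,i;q²) qbinom(j+⌊(n-h-i)/2⌋, 2j; q²) satisfies the same fourth-order recurrence as the coefficients of f: S_n = (1-q²)S_{n-1} + (2q² + q^{2n-2})S_{n-2} + (q⁴ - q² - (z+z⁻¹)q^{2n-3})S_{n-3} + (q^{2n-4} - q⁴)S_{n-4} for n ≥ 4, and S_0 = S_1 = 1, S_2 = 1+q², S_3 = 1+q² - (z+z⁻¹)q³. -/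
open Finset

/-- The Gaussian binomial coefficient with integer arguments: it vanishes
unless `0 ≤ B ≤ A`. -/
def gbZ {K : Type*} [CommRing K] (q : K) (A B : ℤ) : K :=
  if 0 ≤ B ∧ B ≤ A then gb q A.toNat B.toNat else 0

/-- The modified Gaussian binomial coefficient: equals `1` when `A = -1` and
`B = 0`, and the ordinary Gaussian binomial coefficient otherwise. -/
def gbS {K : Type*} [CommRing K] (q : K) (A B : ℤ) : K :=
  if A = -1 ∧ B = 0 then 1 else gbZ q A B

/-- The correction term `ε_n(z,q)` of McLaughlin–Sills Identity 1. -/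
noncomputable def eps1 {K : Type*} [Field K] (z q : K) (n : ℕ) : K :=
  if Even n then
    ∑ j ∈ Icc (-(n : ℤ) - 1) ((n : ℤ) + 1),
      z ^ (2*j) * q ^ (12*j^2 + 6*j + (n : ℤ)) * gbS (q^2) ((n : ℤ) - 1) (((n : ℤ) + 6*j)/2)
  else
    - ∑ j ∈ Icc (-(n : ℤ) - 1) ((n : ℤ) + 1),
      z ^ (2*j - 1) * q ^ (12*j^2 - 6*j + (n : ℤ)) * gbS (q^2) ((n : ℤ) - 1) (((n : ℤ) + 6*j - 3)/2)

/-- The right-hand side `Q_n(z,q)` of McLaughlin–Sills Identity 1: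
`∑_{j∈ℤ} (-1)^j z^j q^{3j²} [n-1, ⌊(n+3j-1)/2⌋]_{q²} + ε_n(z,q)`.
All integer sums are finitely supported, so summing `j` over `[-n-1, n+1]`
captures every nonzero term. -/
noncomputable def Q1 {K : Type*} [Field K] (z q : K) (n : ℕ) : K :=
  (∑ j ∈ Icc (-(n : ℤ) - 1) ((n : ℤ) + 1),
    (-1 : K) ^ j * z ^ j * q ^ (3*j^2) * gbZ (q^2) ((n : ℤ) - 1) (Int.fdiv ((n : ℤ) + 3*j - 1) 2))
  + eps1 z q n

/-- The left-hand side `S_n(z,q)` of McLaughlin–Sills Identity 1. -/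
noncomputable def S1 {K : Type*} [Field K] (z q : K) (n : ℕ) : K :=
  ∑ j ∈ range (n/2 + 1), ∑ h ∈ range (j+1), ∑ i ∈ range (j+1),
    (-1 : K)^(h+i) * z^((h : ℤ) - (i : ℤ)) * q^(h^2 + i^2 + 2*j^2)
      * gb (q^2) j h * gb (q^2) j i * gb (q^2) (j + (n - h - i)/2) (2*j)

/-!
Put `P_j(X) = ∏_{k<j} (1 - z q^{2k+1} X)(1 - z⁻¹ q^{2k+1} X)` and
`G_j(X) = q^{2j²} X^{2j} P_j(X) (1 + X) / ∏_{k ≤ 2j} (1 - q^{2k} X²)`.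
By Cauchy's q-binomial theorem for the sums over `h` and `i`, and the expansion
`1 / ∏_{k ≤ N} (1 - Q^k Y) = ∑_M [M+N, N]_Q Y^M`, the coefficient of `X^n` in `G_j` is the
`j`-th summand of `S_n`. Comparing `G_{j+1}(X)` with `G_j(q²X)` factor by factor gives
`(1 - X)(1 + q²X)(1 - q²X²) G_{j+1}(X) = q²X² (1 - zqX)(1 - z⁻¹qX) G_j(q²X)`, so that
`F = ∑_j G_j = ∑_n S_n X^n` satisfies the q-difference equation
`(1 - X)(1 + q²X)(1 - q²X²) F(X) = q²X² (1 - zqX)(1 - z⁻¹qX) F(q²X) + (1 + q²X)(1 - q²X²)`.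
Its coefficient of `X^n` is the recurrence for `n ≥ 4` and gives the initial values for `n ≤ 3`.
As `G_j = O(X^{2j})`, the sum over `j` is handled through its partial sums.
-/

open PowerSeries

namespace McLaughlinSills

section GaussianBinomial

variable {R : Type*} [CommRing R] (q : R)

theorem gb_zero_right (n : ℕ) : gb q n 0 = 1 := by cases n <;> rfl

theorem gb_succ_succ (n k : ℕ) : gb q (n + 1) (k + 1) = gb q n k + q ^ (k + 1) * gb q n (k + 1) :=
  rfl

theorem gb_eq_zero_of_lt {n k : ℕ} (h : n < k) : gb q n k = 0 := by
  induction n generalizing k with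
  | zero => obtain ⟨k, rfl⟩ := Nat.exists_eq_succ_of_ne_zero h.ne'; rfl
  | succ n ih =>
    obtain ⟨k, rfl⟩ := Nat.exists_eq_succ_of_ne_zero (by omega : k ≠ 0)
    rw [gb_succ_succ, ih (by omega), ih (by omega), mul_zero, add_zero]

theorem gb_self (n : ℕ) : gb q n n = 1 := by
  induction n with
  | zero => rfl
  | succ n ih => rw [gb_succ_succ, ih, gb_eq_zero_of_lt q n.lt_succ_self, mul_zero, add_zero]

/-- The second q-Pascal rule `[n+1, k+1] = [n, k+1] + q^(n-k) [n, k]`, with `n = k + d`. -/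
theorem gb_succ_succ' (k d : ℕ) :
    gb q (k + d + 1) (k + 1) = gb q (k + d) (k + 1) + q ^ d * gb q (k + d) k := by
  induction k generalizing d with
  | zero =>
    induction d with
    | zero => simp [gb_succ_succ, gb_zero_right, gb_eq_zero_of_lt]
    | succ d ih =>
      simp only [Nat.zero_add, gb_succ_succ, gb_zero_right] at ih ⊢
      linear_combination q * ih
  | succ k ihk =>
    induction d with
    | zero => simp [gb_self, gb_eq_zero_of_lt]
    | succ d ihd =>
      have h := ihk (d + 1)
      rw [show k + (d + 1) = k + d + 1 by omega] at h
      rw [show k + 1 + d = k + d + 1 by omega] at ihd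
      rw [show k + 1 + (d + 1) = k + d + 2 by omega]
      linear_combination gb_succ_succ q (k + d + 2) (k + 1) + h + q ^ (k + 2) * ihd
        - gb_succ_succ q (k + d + 1) (k + 1) - q ^ (d + 1) * gb_succ_succ q (k + d + 1) k

theorem neg_mul_pow_mul_sq_pow_choose_two (c : R) (h : ℕ) :
    (-(c * q)) ^ h * (q ^ 2) ^ h.choose 2 = (-1) ^ h * c ^ h * q ^ h ^ 2 := by
  have : h ^ 2 = h + 2 * h.choose 2 := by
    induction h with
    | zero => rfl
    | succ h ih => rw [Nat.choose_succ_succ', Nat.choose_one_right]; nlinarith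
  rw [this, pow_add, pow_mul, neg_pow, mul_pow]
  ring

end GaussianBinomial

section Series

variable {R : Type*} [CommRing R]

theorem rescale_C (a c : R) : rescale a (C c) = C c := by
  ext (_ | n) <;> simp [coeff_C]

theorem constantCoeff_rescale (a : R) (F : R⟦X⟧) :
    constantCoeff (rescale a F) = constantCoeff F := by
  rw [← coeff_zero_eq_constantCoeff_apply, coeff_rescale, pow_zero, one_mul,
    coeff_zero_eq_constantCoeff_apply]

theorem coeff_one_sub_X_sq_mul (F : R⟦X⟧) (n : ℕ) :
    coeff n ((1 - X ^ 2) * F) = coeff n F - if 2 ≤ n then coeff (n - 2) F else 0 := by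
  rw [sub_mul, one_mul, map_sub, coeff_X_pow_mul']

theorem coeff_mul_eq_of_coeff_eq (p : R⟦X⟧) {F G : R⟦X⟧} {n : ℕ}
    (h : ∀ m ≤ n, coeff m F = coeff m G) : coeff n (p * F) = coeff n (p * G) := by
  simp only [coeff_mul]
  exact sum_congr rfl fun x hx => by rw [h x.2 (HasAntidiagonal.antidiagonal.snd_le hx)]

/-- Cauchy's q-binomial theorem identifies this with `∏_{k<j} (1 + a Q^k X)`. -/
noncomputable def cauchyPoly (a Q : R) (j : ℕ) : R⟦X⟧ :=
  mk fun h => a ^ h * Q ^ h.choose 2 * gb Q j h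

theorem cauchyPoly_zero (a Q : R) : cauchyPoly a Q 0 = 1 := by
  ext (_ | h) <;> simp [cauchyPoly, coeff_one, gb_zero_right, gb_eq_zero_of_lt]

theorem cauchyPoly_succ (a Q : R) (j : ℕ) :
    cauchyPoly a Q (j + 1) = (1 + C a * X) * rescale Q (cauchyPoly a Q j) := by
  ext (_ | h) <;> rw [add_mul, one_mul, map_add, mul_assoc, coeff_C_mul]
  · simp [cauchyPoly, gb_zero_right]
  · simp only [coeff_succ_X_mul, cauchyPoly, coeff_rescale, coeff_mk, gb_succ_succ,
      Nat.choose_succ_succ', Nat.choose_one_right]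
    ring

theorem cauchyPoly_eq_sum (a Q : R) (j : ℕ) :
    cauchyPoly a Q j = ∑ h ∈ range (j + 1), C (a ^ h * Q ^ h.choose 2 * gb Q j h) * X ^ h := by
  ext n
  simp only [cauchyPoly, coeff_mk, map_sum, coeff_C_mul_X_pow, sum_ite_eq, mem_range]
  split_ifs with hn
  · rfl
  · rw [gb_eq_zero_of_lt Q (by omega), mul_zero]

/-- The expansion of `1 / ∏_{k ≤ N} (1 - q^{2k} X²)`. -/
noncomputable def evenGbSeries (q : R) (N : ℕ) : R⟦X⟧ :=
  mk fun m => if Even m then gb (q ^ 2) (m / 2 + N) N else 0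

theorem coeff_evenGbSeries_two_mul (q : R) (N M : ℕ) :
    coeff (2 * M) (evenGbSeries q N) = gb (q ^ 2) (M + N) N := by
  simp [evenGbSeries]

theorem coeff_evenGbSeries_two_mul_add_one (q : R) (N M : ℕ) :
    coeff (2 * M + 1) (evenGbSeries q N) = 0 := by
  simp [evenGbSeries]

theorem one_sub_X_sq_mul_evenGbSeries_zero (q : R) : (1 - X ^ 2) * evenGbSeries q 0 = 1 := by
  ext n
  obtain ⟨M, rfl | rfl⟩ := Nat.even_or_odd' n <;> rcases M with _ | M <;>
    rw [coeff_one_sub_X_sq_mul, coeff_one]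
  · rw [if_neg (by omega), coeff_evenGbSeries_two_mul, gb_zero_right, if_pos rfl, sub_zero]
  · rw [if_pos (by omega), show 2 * (M + 1) - 2 = 2 * M by omega, coeff_evenGbSeries_two_mul,
      coeff_evenGbSeries_two_mul, gb_zero_right, gb_zero_right, if_neg (by omega), sub_self]
  · rw [if_neg (by omega), coeff_evenGbSeries_two_mul_add_one, if_neg (by omega), sub_zero]
  · rw [if_pos (by omega), show 2 * (M + 1) + 1 - 2 = 2 * M + 1 by omega,
      coeff_evenGbSeries_two_mul_add_one, coeff_evenGbSeries_two_mul_add_one, if_neg (by omega),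
      sub_self]

theorem one_sub_X_sq_mul_evenGbSeries_succ (q : R) (N : ℕ) :
    (1 - X ^ 2) * evenGbSeries q (N + 1) = rescale q (evenGbSeries q N) := by
  ext n
  obtain ⟨M, rfl | rfl⟩ := Nat.even_or_odd' n <;> rcases M with _ | M <;>
    rw [coeff_one_sub_X_sq_mul, coeff_rescale]
  · rw [if_neg (by omega), coeff_evenGbSeries_two_mul, coeff_evenGbSeries_two_mul, zero_add,
      zero_add, gb_self, gb_self]
    simp
  · rw [if_pos (by omega), show 2 * (M + 1) - 2 = 2 * M by omega, coeff_evenGbSeries_two_mul,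
      coeff_evenGbSeries_two_mul, coeff_evenGbSeries_two_mul, pow_mul,
      show M + 1 + (N + 1) = N + (M + 1) + 1 by omega, gb_succ_succ',
      show M + (N + 1) = N + (M + 1) by omega, show M + 1 + N = N + (M + 1) by omega]
    ring
  · rw [if_neg (by omega), coeff_evenGbSeries_two_mul_add_one, coeff_evenGbSeries_two_mul_add_one]
    simp
  · rw [if_pos (by omega), show 2 * (M + 1) + 1 - 2 = 2 * M + 1 by omega,
      coeff_evenGbSeries_two_mul_add_one, coeff_evenGbSeries_two_mul_add_one,
      coeff_evenGbSeries_two_mul_add_one]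
    simp

theorem evenGbSeries_add_two (q : R) (N : ℕ) :
    (1 - X ^ 2) * (1 - C (q ^ 2) * X ^ 2) * evenGbSeries q (N + 2)
      = rescale (q ^ 2) (evenGbSeries q N) := by
  have h : rescale q (1 - X ^ 2 : R⟦X⟧) = 1 - C (q ^ 2) * X ^ 2 := by
    rw [map_sub, map_one, map_pow, rescale_X, mul_pow, map_pow]
  rw [mul_right_comm, one_sub_X_sq_mul_evenGbSeries_succ, ← h, ← map_mul, mul_comm,
    one_sub_X_sq_mul_evenGbSeries_succ, rescale_rescale, sq]

theorem coeff_one_add_X_mul_evenGbSeries (q : R) (N m : ℕ) :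
    coeff m ((1 + X) * evenGbSeries q N) = gb (q ^ 2) (m / 2 + N) N := by
  rw [add_mul, one_mul, map_add]
  obtain ⟨M, rfl | rfl⟩ := Nat.even_or_odd' m
  · rcases M with _ | M
    · rw [coeff_zero_X_mul, coeff_evenGbSeries_two_mul, add_zero, Nat.mul_zero]
    · rw [show 2 * (M + 1) = 2 * M + 1 + 1 by ring, coeff_succ_X_mul,
        coeff_evenGbSeries_two_mul_add_one, add_zero, show 2 * M + 1 + 1 = 2 * (M + 1) by ring,
        coeff_evenGbSeries_two_mul, Nat.mul_div_cancel_left _ two_pos]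
  · rw [coeff_succ_X_mul, coeff_evenGbSeries_two_mul_add_one, coeff_evenGbSeries_two_mul,
      zero_add, show (2 * M + 1) / 2 = M by omega]

/-- The series `G_j` of the proof sketch, with `(z, z⁻¹)` replaced by `(a, b)`. -/
noncomputable def summandSeries (a b q : R) (j : ℕ) : R⟦X⟧ :=
  C (q ^ (2 * j ^ 2)) * X ^ (2 * j) * cauchyPoly (-(a * q)) (q ^ 2) j
    * cauchyPoly (-(b * q)) (q ^ 2) j * ((1 + X) * evenGbSeries q (2 * j))

theorem summandSeries_succ (a b q : R) (j : ℕ) :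
    (1 - X) * (1 + C (q ^ 2) * X) * (1 - C (q ^ 2) * X ^ 2) * summandSeries a b q (j + 1)
      = C (q ^ 2) * X ^ 2 * (1 - C (a * q) * X) * (1 - C (b * q) * X)
        * rescale (q ^ 2) (summandSeries a b q j) := by
  have hE := evenGbSeries_add_two q (2 * j)
  have hC : C (q ^ (2 * (j + 1) ^ 2)) = C (q ^ 2) * C (q ^ 2) ^ (2 * j) * C (q ^ (2 * j ^ 2)) := by
    rw [← map_pow, ← map_mul, ← map_mul, ← pow_mul, ← pow_add, ← pow_add]
    congr 2
    ring
  simp only [summandSeries, cauchyPoly_succ, map_neg, hC, map_mul (rescale (q ^ 2)),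
    map_pow (rescale (q ^ 2)), map_add (rescale (q ^ 2)), map_one, rescale_X, rescale_C, ← hE,
    show 2 * (j + 1) = 2 * j + 2 by ring]
  ring

theorem summandSeries_zero (a b q : R) : summandSeries a b q 0 = (1 + X) * evenGbSeries q 0 := by
  simp [summandSeries, cauchyPoly_zero]

theorem sum_summandSeries_qDifference (a b q : R) (J : ℕ) :
    (1 - X) * (1 + C (q ^ 2) * X) * (1 - C (q ^ 2) * X ^ 2)
        * ∑ j ∈ range (J + 1), summandSeries a b q j
      = C (q ^ 2) * X ^ 2 * (1 - C (a * q) * X) * (1 - C (b * q) * X)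
          * rescale (q ^ 2) (∑ j ∈ range J, summandSeries a b q j)
        + (1 + C (q ^ 2) * X) * (1 - C (q ^ 2) * X ^ 2) := by
  induction J with
  | zero =>
    rw [sum_range_one, summandSeries_zero, sum_range_zero, map_zero, mul_zero, zero_add]
    linear_combination (1 + C (q ^ 2) * X) * (1 - C (q ^ 2) * X ^ 2)
      * one_sub_X_sq_mul_evenGbSeries_zero q
  | succ J ih =>
    rw [sum_range_succ _ (J + 1), mul_add, ih, summandSeries_succ, sum_range_succ _ J, map_add]
    ring

theorem coeff_summandSeries_of_lt (a b q : R) {j n : ℕ} (h : n < 2 * j) :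
    coeff n (summandSeries a b q j) = 0 := by
  rw [summandSeries, mul_assoc, mul_assoc, mul_assoc, coeff_C_mul, coeff_X_pow_mul',
    if_neg (by omega), mul_zero]

theorem coeff_summandSeries (a b q : R) (j n : ℕ) :
    coeff n (summandSeries a b q j) = ∑ h ∈ range (j + 1), ∑ i ∈ range (j + 1),
      q ^ (2 * j ^ 2) * ((-(a * q)) ^ h * (q ^ 2) ^ h.choose 2 * gb (q ^ 2) j h)
        * ((-(b * q)) ^ i * (q ^ 2) ^ i.choose 2 * gb (q ^ 2) j i)
        * if 2 * j + h + i ≤ n then gb (q ^ 2) ((n - (2 * j + h + i)) / 2 + 2 * j) (2 * j)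
          else 0 := by
  simp only [summandSeries, cauchyPoly_eq_sum, sum_mul, mul_sum, map_sum]
  rw [sum_comm]
  refine sum_congr rfl fun h _ => sum_congr rfl fun i _ => ?_
  rw [← coeff_one_add_X_mul_evenGbSeries, ← coeff_X_pow_mul', ← coeff_C_mul]
  congr 1
  simp only [map_mul, pow_add]
  ring

end Series

section Field

variable {K : Type*} [Field K] {z : K} (q : K)

theorem coeff_summandSeries_inv (hz : z ≠ 0) (j n : ℕ) :
    coeff n (summandSeries z z⁻¹ q j) = ∑ h ∈ range (j + 1), ∑ i ∈ range (j + 1),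
      (-1 : K) ^ (h + i) * z ^ ((h : ℤ) - (i : ℤ)) * q ^ (h ^ 2 + i ^ 2 + 2 * j ^ 2)
        * gb (q ^ 2) j h * gb (q ^ 2) j i * gb (q ^ 2) (j + (n - h - i) / 2) (2 * j) := by
  rw [coeff_summandSeries]
  refine sum_congr rfl fun h hh => sum_congr rfl fun i hi => ?_
  rw [mem_range] at hh hi
  have hlast : (if 2 * j + h + i ≤ n then gb (q ^ 2) ((n - (2 * j + h + i)) / 2 + 2 * j) (2 * j)
      else 0) = gb (q ^ 2) (j + (n - h - i) / 2) (2 * j) := by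
    split_ifs
    · congr 1; omega
    · rw [gb_eq_zero_of_lt _ (by omega)]
  rw [hlast, neg_mul_pow_mul_sq_pow_choose_two, neg_mul_pow_mul_sq_pow_choose_two, zpow_sub₀ hz,
    zpow_natCast, zpow_natCast, inv_pow]
  ring

theorem coeff_sum_summandSeries_inv (hz : z ≠ 0) {n J : ℕ} (hn : n < 2 * J) :
    coeff n (∑ j ∈ range J, summandSeries z z⁻¹ q j) = S1 z q n := by
  rw [map_sum, S1]
  refine (sum_subset (range_subset_range.mpr (by omega)) fun j _ hj => ?_).symm.trans
    (sum_congr rfl fun j _ => coeff_summandSeries_inv q hz j n)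
  rw [mem_range, not_lt] at hj
  exact coeff_summandSeries_of_lt _ _ _ (by omega)

theorem S1_genFun_qDifference (hz : z ≠ 0) :
    (1 - X) * (1 + C (q ^ 2) * X) * (1 - C (q ^ 2) * X ^ 2) * PowerSeries.mk (S1 z q)
      = C (q ^ 2) * X ^ 2 * (1 - C (z * q) * X) * (1 - C (z⁻¹ * q) * X)
          * rescale (q ^ 2) (PowerSeries.mk (S1 z q))
        + (1 + C (q ^ 2) * X) * (1 - C (q ^ 2) * X ^ 2) := by
  ext n
  have hS : ∀ m ≤ n, coeff m (PowerSeries.mk (S1 z q))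
      = coeff m (∑ j ∈ range (n + 1 + 1), summandSeries z z⁻¹ q j) := by
    intro m hm
    rw [coeff_mk, coeff_sum_summandSeries_inv q hz (by omega)]
  have hR : ∀ m ≤ n, coeff m (rescale (q ^ 2) (PowerSeries.mk (S1 z q)))
      = coeff m (rescale (q ^ 2) (∑ j ∈ range (n + 1), summandSeries z z⁻¹ q j)) := by
    intro m hm
    rw [coeff_rescale, coeff_rescale, coeff_mk, coeff_sum_summandSeries_inv q hz (by omega)]
  rw [map_add, coeff_mul_eq_of_coeff_eq _ hS, coeff_mul_eq_of_coeff_eq _ hR, ← map_add]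
  exact congrArg (coeff n) (sum_summandSeries_qDifference z z⁻¹ q (n + 1))

theorem S1_add_four (hz : z ≠ 0) (m : ℕ) :
    S1 z q (m + 4) = (1 - q ^ 2) * S1 z q (m + 3) + (2 * q ^ 2 + q ^ (2 * m + 6)) * S1 z q (m + 2)
      + (q ^ 4 - q ^ 2 - (z + z⁻¹) * q ^ (2 * m + 5)) * S1 z q (m + 1)
      + (q ^ (2 * m + 4) - q ^ 4) * S1 z q m := by
  have h := congrArg (coeff (m + 4)) (S1_genFun_qDifference q hz)
  simp only [pow_succ, pow_zero, one_mul, map_mul, mul_assoc, sub_mul, add_mul, map_sub, map_add,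
    coeff_mk, coeff_C_mul, coeff_succ_X_mul, coeff_rescale, coeff_one, Nat.add_eq_zero_iff,
    OfNat.ofNat_ne_zero, and_false, ↓reduceIte, coeff_succ_mul_X, coeff_X, Nat.reduceEqDiff,
    mul_zero, sub_self, add_zero] at h
  linear_combination h + q ^ 4 * (q ^ 2) ^ m * S1 z q m * mul_inv_cancel₀ hz

theorem S1_initial (hz : z ≠ 0) :
    S1 z q 0 = 1 ∧ S1 z q 1 = 1 ∧ S1 z q 2 = 1 + q ^ 2 ∧
      S1 z q 3 = 1 + q ^ 2 - (z + z⁻¹) * q ^ 3 := by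
  have h (n : ℕ) := congrArg (coeff n) (S1_genFun_qDifference q hz)
  have h0 := h 0
  have h1 := h 1
  have h2 := h 2
  have h3 := h 3
  simp only [pow_succ, pow_zero, one_mul, map_mul, mul_assoc, sub_mul, add_mul,
    coeff_zero_eq_constantCoeff, map_sub, map_add, constantCoeff_mk, constantCoeff_C,
    constantCoeff_X, zero_mul, mul_zero, sub_zero, add_zero, constantCoeff_rescale,
    constantCoeff_one, mul_one, zero_add, coeff_mk, coeff_C_mul, coeff_succ_X_mul, coeff_one,
    one_ne_zero, ↓reduceIte, coeff_succ_mul_X, coeff_X, zero_ne_one, sub_self,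
    OfNat.ofNat_ne_zero, zero_sub, coeff_rescale, OfNat.ofNat_ne_one, mul_neg] at h0 h1 h2 h3
  have e1 : S1 z q 1 = 1 := by linear_combination h1 + (1 - q ^ 2) * h0
  rw [h0, e1] at h2
  have e2 : S1 z q 2 = 1 + q ^ 2 := by linear_combination h2
  rw [h0, e1, e2] at h3
  exact ⟨h0, e1, e2, by linear_combination h3⟩

end Field

end McLaughlinSills

theorem S1_recurrence_and_initial_general {K : Type*} [Field K] (z q : K)
    (hz : z ≠ 0) :
    (∀ n : ℕ, 4 ≤ n →
      S1 z q n =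
        (1 - q^2) * S1 z q (n-1) + (2*q^2 + q^(2*n-2)) * S1 z q (n-2)
          + (q^4 - q^2 - (z + z⁻¹) * q^(2*n-3)) * S1 z q (n-3)
          + (q^(2*n-4) - q^4) * S1 z q (n-4)) ∧
    S1 z q 0 = 1 ∧ S1 z q 1 = 1 ∧ S1 z q 2 = 1 + q^2 ∧
      S1 z q 3 = 1 + q^2 - (z + z⁻¹) * q^3 := by
  refine ⟨fun n hn => ?_, McLaughlinSills.S1_initial q hz⟩
  obtain ⟨m, rfl⟩ := Nat.exists_eq_add_of_le' hn
  rw [McLaughlinSills.S1_add_four q hz m, show m + 4 - 1 = m + 3 by omega,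
    show m + 4 - 2 = m + 2 by omega, show m + 4 - 3 = m + 1 by omega, show m + 4 - 4 = m by omega,
    show 2 * (m + 4) - 2 = 2 * m + 6 by omega, show 2 * (m + 4) - 3 = 2 * m + 5 by omega,
    show 2 * (m + 4) - 4 = 2 * m + 4 by omega]

/-- The triple sum `S_n(z,q)` (the left side of McLaughlin–Sills Identity 1)
satisfies the fourth-order recurrence (for `n ≥ 4`)
`S_n = (1-q²)S_{n-1} + (2q²+q^{2n-2})S_{n-2} + (q⁴-q²-(z+z⁻¹)q^{2n-3})S_{n-3}
      + (q^{2n-4}-q⁴)S_{n-4}`,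
with initial conditions `S_0 = S_1 = 1`, `S_2 = 1+q²`, `S_3 = 1+q²-(z+z⁻¹)q³`. -/
theorem S1_recurrence_and_initial {K : Type*} [Field K] (z q : K)
    (hz : z ≠ 0) (hq : q ≠ 0) :
    (∀ n : ℕ, 4 ≤ n →
      S1 z q n =
        (1 - q^2) * S1 z q (n-1) + (2*q^2 + q^(2*n-2)) * S1 z q (n-2)
          + (q^4 - q^2 - (z + z⁻¹) * q^(2*n-3)) * S1 z q (n-3)
          + (q^(2*n-4) - q^4) * S1 z q (n-4)) ∧
    S1 z q 0 = 1 ∧ S1 z q 1 = 1 ∧ S1 z q 2 = 1 + q^2 ∧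
      S1 z q 3 = 1 + q^2 - (z + z⁻¹) * q^3 :=
  S1_recurrence_and_initial_general z q hz
end
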